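/- arXiv:2011.06273 — 4 statements merged into one kernel-verified Lean document; each statement's English description precedes it below -/
import Mathlib

section
/- The Galois group of the splitting field of 𝔈_4(x) over ℚ is isomorphic to the symmetric group S_3. -/
/-!
Clearing denominators, `24 · 𝔈₄ = (X + 2) · q` with `q = X³ + 6X² + 12X + 24` (`eFourCubic`),
so `𝔈₄` and `q` have the same splitting field. The cubic `q` is Eisenstein at `3`, hence irreducible, and
`q(x) = (x + 2)³ + 16` is strictly increasing on `ℝ`, so `q` has exactly two nonreal roots.
Complex conjugation therefore acts on the roots of `q` as a transposition, and a transitive group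
of prime degree `3` containing a transposition is the full symmetric group.
-/

open Polynomial Finset

/-- `𝔈ₙ(x) = xⁿ/n! + 2·∑_{i=0}^{n-1} xⁱ/i!` as a polynomial over `ℚ`. -/
noncomputable def E (n : ℕ) : Polynomial ℚ :=
  C ((1 : ℚ) / n.factorial) * X ^ n +
    C 2 * ∑ i ∈ Finset.range n, C ((1 : ℚ) / i.factorial) * X ^ i

namespace Polynomial

section SplittingField

variable {F L : Type*} [Field F] [Field L] [Algebra F L]

theorem isSplittingField_self_of_splits {r : F[X]} (hr : r.Splits) : IsSplittingField F F r where
  splits' := by rwa [Algebra.algebraMap_self, map_id]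
  adjoin_rootSet' := Subsingleton.elim _ _

theorem IsSplittingField.mul_of_splits {r q : F[X]} (hr : r.Splits) (hr0 : r ≠ 0) (hq0 : q ≠ 0)
    [IsSplittingField F L q] : IsSplittingField F L (r * q) :=
  have := isSplittingField_self_of_splits hr
  have : IsSplittingField F L (q.map (algebraMap F F)) := by
    rwa [Algebra.algebraMap_self, map_id]
  IsSplittingField.mul (K := F) L r q hr0 hq0

noncomputable def Gal.mulEquivOfSplits {r q : F[X]} (hr : r.Splits) (hr0 : r ≠ 0)
    (hq0 : q ≠ 0) : (r * q).Gal ≃* q.Gal :=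
  have := IsSplittingField.mul_of_splits (L := q.SplittingField) hr hr0 hq0
  AlgEquiv.autCongr (IsSplittingField.algEquiv q.SplittingField (r * q)).symm

end SplittingField

theorem card_rootSet_le_one_of_injective {R S : Type*} [CommRing R] [CommRing S] [IsDomain S]
    [Algebra R S] {p : R[X]} (hp : Function.Injective fun x : S => aeval x p) :
    Fintype.card (p.rootSet S) ≤ 1 :=
  Fintype.card_le_one_iff.mpr fun x y => Subtype.ext <| hp <|
    (aeval_eq_zero_of_mem_rootSet x.2).trans (aeval_eq_zero_of_mem_rootSet y.2).symm

theorem Gal.nonempty_mulEquiv_perm_of_prime_degree {p : ℚ[X]} (p_irr : Irreducible p)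
    (p_deg : p.natDegree.Prime)
    (p_roots1 : Fintype.card (p.rootSet ℝ) + 1 ≤ p.natDegree)
    (p_roots2 : p.natDegree ≤ Fintype.card (p.rootSet ℝ) + 3) :
    Nonempty (p.Gal ≃* Equiv.Perm (Fin p.natDegree)) := by
  have card_complex : Fintype.card (p.rootSet ℂ) = p.natDegree :=
    card_rootSet_eq_natDegree p_irr.separable (IsAlgClosed.splits _)
  have bijective := galActionHom_bijective_of_prime_degree' p_irr p_deg
    (card_complex ▸ p_roots1) (card_complex ▸ p_roots2)
  exact ⟨(MulEquiv.ofBijective _ bijective).trans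
    (Fintype.equivFinOfCardEq card_complex).permCongrHom⟩

end Polynomial

noncomputable def eFourCubic (R : Type*) [CommRing R] : R[X] :=
  X ^ 3 + C 6 * X ^ 2 + C 12 * X + C 24

section eFourCubic

variable (R : Type*) [CommRing R]

theorem eFourCubic_monic [Nontrivial R] : (eFourCubic R).Monic := by
  unfold eFourCubic; monicity!

theorem natDegree_eFourCubic [Nontrivial R] : (eFourCubic R).natDegree = 3 := by
  unfold eFourCubic; compute_degree!

theorem map_eFourCubic {S : Type*} [CommRing S] (f : R →+* S) :
    (eFourCubic R).map f = eFourCubic S := by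
  simp [eFourCubic, map_ofNat]

end eFourCubic

theorem eFourCubic_isEisensteinAt_three : (eFourCubic ℤ).IsEisensteinAt (Ideal.span {3}) where
  leading := by
    rw [(eFourCubic_monic ℤ).leadingCoeff, Ideal.mem_span_singleton]
    decide
  mem {n} hn := by
    rw [natDegree_eFourCubic] at hn
    rw [Ideal.mem_span_singleton]
    interval_cases n <;> simp [eFourCubic, coeff_X]
  notMem := by
    rw [Ideal.span_singleton_pow, Ideal.mem_span_singleton]
    simp [eFourCubic]

theorem irreducible_eFourCubic : Irreducible (eFourCubic ℚ) := by
  rw [← map_eFourCubic ℤ (algebraMap ℤ ℚ),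
    ← (eFourCubic_monic ℤ).irreducible_iff_irreducible_map_fraction_map]
  exact eFourCubic_isEisensteinAt_three.irreducible
    ((Ideal.span_singleton_prime (by norm_num)).mpr Int.prime_three)
    (eFourCubic_monic ℤ).isPrimitive (by rw [natDegree_eFourCubic]; norm_num)

theorem aeval_eFourCubic {K : Type*} [CommRing K] [Algebra ℚ K] (x : K) :
    aeval x (eFourCubic ℚ) = (x + 2) ^ 3 + 16 := by
  simp only [eFourCubic, map_add, map_mul, map_pow, map_ofNat, aeval_X]
  ring

theorem card_rootSet_real_eFourCubic_le_one : Fintype.card ((eFourCubic ℚ).rootSet ℝ) ≤ 1 := by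
  refine card_rootSet_le_one_of_injective fun x y hxy => ?_
  simp only [aeval_eFourCubic, add_left_inj] at hxy
  simpa using (Odd.strictMono_pow (R := ℝ) (by decide : Odd 3)).injective hxy

theorem E_four_eq : E 4 = C (1 / 24 : ℚ) * (X + C 2) * eFourCubic ℚ := by
  refine Polynomial.funext fun x => ?_
  simp only [E, eFourCubic, sum_range_succ, sum_range_zero, eval_add, eval_mul, eval_C, eval_pow,
    eval_X, eval_zero, Nat.factorial]
  push_cast
  ring

/-- The Galois group of the splitting field of `𝔈₄` over `ℚ` is isomorphic to
the symmetric group `S₃`. -/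
theorem gal_E_four : Nonempty ((E 4).Gal ≃* Equiv.Perm (Fin 3)) := by
  obtain ⟨e⟩ := Gal.nonempty_mulEquiv_perm_of_prime_degree irreducible_eFourCubic
    (by rw [natDegree_eFourCubic]; exact Nat.prime_three)
    (by rw [natDegree_eFourCubic]; linarith [card_rootSet_real_eFourCubic_le_one])
    (by rw [natDegree_eFourCubic]; omega)
  rw [natDegree_eFourCubic] at e
  rw [E_four_eq]
  exact ⟨(Gal.mulEquivOfSplits ((Splits.X_add_C 2).C_mul _) (by simp [X_add_C_ne_zero])
    (eFourCubic_monic ℚ).ne_zero).trans e⟩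
end

section
/- For every positive integer n, the discriminant of the monic polynomial n!·𝔈_n(x) over ℚ equals (-1)^{n(n-1)/2} · 2^{n-1} · (n!)^n · 𝔈_n(-n). -/
open Polynomial Finset

/-- The discriminant `∏_{1 ≤ i < j ≤ n} (αᵢ - αⱼ)²` of a monic rational polynomial,
computed from its list of roots `α₁, …, αₙ` (with multiplicity) in `ℂ`.  Since each
difference is squared, the value does not depend on the ordering of the roots. -/
noncomputable def discC (f : Polynomial ℚ) : ℂ :=
  let l := ((f.map (algebraMap ℚ ℂ)).roots).toList
  ∏ ij ∈ (Finset.range l.length ×ˢ Finset.range l.length).filter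
      (fun ij => ij.1 < ij.2), (l.getD ij.1 0 - l.getD ij.2 0) ^ 2

/-!
The discriminant of a monic `f` of degree `n` is `(-1)^{n(n-1)/2} ∏ f'(α)` over its roots `α`.
Since `𝔈_{m+1}' = 𝔈_m`, the polynomial `f = n!·𝔈_n` satisfies `f' = f - (Xⁿ + n·Xⁿ⁻¹)`,
so `f'(α) = α^{n-1}·(-n - α)` at every root. The product of these values is
`(∏ α)^{n-1}·f(-n) = ((-1)ⁿ f(0))^{n-1}·f(-n)`, where the sign vanishes as `n(n-1)` is even,
and `f(0) = 2·n!`, `f(-n) = n!·𝔈_n(-n)`.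
-/

theorem List.prod_map_eq_prod_range_getD {α M : Type*} [CommMonoid M] (l : List α) (d : α)
    (f : α → M) : (l.map f).prod = ∏ i ∈ Finset.range l.length, f (l.getD i d) := by
  induction l with
  | nil => simp
  | cons a t ih => simp [Finset.prod_range_succ', ih, mul_comm]

theorem Finset.prod_product_filter_lt_sub_sq {ι R : Type*} [LinearOrder ι] [CommRing R]
    (s : Finset ι) (g : ι → R) :
    ∏ x ∈ s ×ˢ s with x.1 < x.2, (g x.1 - g x.2) ^ 2 =
      (-1) ^ (#s).choose 2 * ∏ i ∈ s, ∏ j ∈ s.erase i, (g i - g j) := by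
  have h_offDiag :
      ∏ i ∈ s, ∏ j ∈ s.erase i, (g i - g j) = ∏ x ∈ s.offDiag, (g x.1 - g x.2) :=
    (prod_finset_product s.offDiag s s.erase (f := fun x => g x.1 - g x.2) fun x => by
      simp only [mem_offDiag, mem_erase]; tauto).symm
  have h_swap : ∏ x ∈ s.offDiag with ¬x.1 < x.2, (g x.1 - g x.2) =
      ∏ x ∈ s ×ˢ s with x.1 < x.2, (g x.2 - g x.1) :=
    prod_equiv (Equiv.prodComm ι ι) (fun x => by simp only [mem_filter, mem_offDiag, mem_product]; grind) (fun _ _ => rfl)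
  have h_lt : {x ∈ s.offDiag | x.1 < x.2} = {x ∈ s ×ˢ s | x.1 < x.2} := by
    ext x; simp only [mem_filter, mem_offDiag, mem_product]; grind
  have h_sq : (-1) ^ (#s).choose 2 * (-1) ^ (#s).choose 2 = (1 : R) := by
    rw [← mul_pow, neg_one_mul, neg_neg, one_pow]
  have h_pair : ∀ x ∈ {x ∈ s ×ˢ s | x.1 < x.2},
      (g x.1 - g x.2) * (g x.2 - g x.1) = -(g x.1 - g x.2) ^ 2 := fun _ _ => by ring
  rw [h_offDiag, ← prod_filter_mul_prod_filter_not s.offDiag (fun x => x.1 < x.2), h_swap, h_lt,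
    ← prod_mul_distrib, prod_congr rfl h_pair, prod_neg, card_product_filter_lt, ← mul_assoc,
    h_sq, one_mul]

theorem Polynomial.degree_sum_range_C_mul_X_pow_lt {R : Type*} [Semiring R] (n : ℕ)
    (a : ℕ → R) :
    (∑ i ∈ range n, C (a i) * X ^ i).degree < (n : WithBot ℕ) := by
  simpa [Fin.sum_univ_eq_sum_range (fun i => C (a i) * X ^ i)] using
    degree_sum_fin_lt (fun i : Fin n => a i)

theorem Polynomial.Splits.prod_roots_map_pow_mul_sub {K : Type*} [Field K] {p : K[X]}
    (hp : p.Splits) (hm : p.Monic) (m : ℕ) (c : K) :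
    (p.roots.map fun α => α ^ m * (c - α)).prod =
      ((-1) ^ p.natDegree * p.eval 0) ^ m * p.eval c := by
  have h_sign : ((-1) ^ p.natDegree * (-1) ^ p.natDegree : K) = 1 := by
    rw [← mul_pow, neg_one_mul, neg_neg, one_pow]
  rw [Multiset.prod_map_mul, Multiset.prod_map_pow, Multiset.map_id',
    ← hp.eval_eq_prod_roots_of_monic hm, ← coeff_zero_eq_eval_zero,
    hp.coeff_zero_eq_prod_roots_of_monic hm, ← mul_assoc, h_sign, one_mul]

theorem discC_eq_prod_roots_eval_derivative {f : ℚ[X]} (hf : f.Monic) :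
    discC f = (-1) ^ (f.natDegree * (f.natDegree - 1) / 2) *
      ((f.map (algebraMap ℚ ℂ)).roots.map
        fun α => (derivative (f.map (algebraMap ℚ ℂ))).eval α).prod := by
  set p := f.map (algebraMap ℚ ℂ)
  set l := p.roots.toList
  have hp : p.Splits := IsAlgClosed.splits p
  have hlen : l.length = f.natDegree := by
    simp [l, ← hp.natDegree_eq_card_roots, p]
  have hnodal : p = Lagrange.nodal (range l.length) (l.getD · 0) := by
    conv_lhs => rw [hp.eq_prod_roots_of_monic (hf.map _), ← Multiset.coe_toList p.roots]
    rw [Multiset.map_coe, Multiset.prod_coe, List.prod_map_eq_prod_range_getD l 0]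
    rfl
  have hderiv : ∀ i ∈ range l.length, (derivative p).eval (l.getD i 0) =
      ∏ j ∈ (range l.length).erase i, (l.getD i 0 - l.getD j 0) := fun i hi => by
    rw [hnodal]
    exact (Lagrange.eval_nodal_derivative_eval_node_eq (v := (l.getD · 0)) hi).trans
      Lagrange.eval_nodal
  have hdisc := prod_product_filter_lt_sub_sq (range l.length) (l.getD · 0)
  rw [card_range, Nat.choose_two_right] at hdisc
  rw [← hlen, ← Multiset.coe_toList p.roots, Multiset.map_coe, Multiset.prod_coe,
    List.prod_map_eq_prod_range_getD l 0, prod_congr rfl hderiv, ← hdisc]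
  rfl

theorem E_succ (m : ℕ) :
    E (m + 1) = E m + C ((1 : ℚ) / (m + 1).factorial) * X ^ (m + 1) +
      C ((1 : ℚ) / m.factorial) * X ^ m := by
  simp only [E, sum_range_succ, map_ofNat C 2]
  ring

theorem derivative_C_one_div_factorial_mul_X_pow (k : ℕ) :
    derivative (C ((1 : ℚ) / (k + 1).factorial) * X ^ (k + 1)) =
      C ((1 : ℚ) / k.factorial) * X ^ k := by
  rw [derivative_C_mul_X_pow, Nat.add_sub_cancel, Nat.factorial_succ]
  congr 1
  push_cast
  field_simp

theorem derivative_E_succ (m : ℕ) : derivative (E (m + 1)) = E m := by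
  induction m with
  | zero => simp [E]
  | succ m ih =>
    rw [E_succ (m + 1), derivative_add, derivative_add, ih,
      derivative_C_one_div_factorial_mul_X_pow, derivative_C_one_div_factorial_mul_X_pow, E_succ]

theorem factorial_smul_E (n : ℕ) :
    (n.factorial : ℚ) • E n =
      X ^ n + ∑ i ∈ range n, C (2 * n.factorial / i.factorial : ℚ) * X ^ i := by
  have : (n.factorial : ℚ) ≠ 0 := by positivity
  simp only [E, smul_add, smul_eq_C_mul, mul_sum, ← mul_assoc, ← C_mul]
  field_simp
  rw [C_1, one_mul]

theorem factorial_smul_E_succ_sub (m : ℕ) :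
    ((m + 1).factorial : ℚ) • (E (m + 1) - E m) = X ^ (m + 1) + C ((m : ℚ) + 1) * X ^ m := by
  have h_top : ((m + 1).factorial : ℚ) * (1 / (m + 1).factorial) = 1 := by field_simp
  have h_next : ((m + 1).factorial : ℚ) * (1 / m.factorial) = m + 1 := by
    rw [Nat.factorial_succ]; push_cast; field_simp
  rw [E_succ, add_assoc, add_sub_cancel_left, smul_add, smul_eq_C_mul, smul_eq_C_mul,
    ← mul_assoc, ← mul_assoc, ← C_mul, ← C_mul, h_top, h_next, C_1, one_mul]

theorem E_eval_zero {n : ℕ} (hn : 0 < n) : (E n).eval 0 = 2 := by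
  simp [E, eval_finsetSum, hn.ne', zero_pow_eq, sum_ite_eq', hn]

theorem monic_factorial_smul_E (n : ℕ) : ((n.factorial : ℚ) • E n).Monic := by
  rw [factorial_smul_E]
  exact monic_X_pow_add (degree_sum_range_C_mul_X_pow_lt n _)

theorem natDegree_factorial_smul_E (n : ℕ) : ((n.factorial : ℚ) • E n).natDegree = n := by
  rw [factorial_smul_E, natDegree_add_eq_left_of_degree_lt, natDegree_X_pow]
  rw [degree_X_pow]
  exact degree_sum_range_C_mul_X_pow_lt n _

theorem derivative_factorial_smul_E_succ (m : ℕ) :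
    derivative (((m + 1).factorial : ℚ) • E (m + 1)) =
      ((m + 1).factorial : ℚ) • E (m + 1) - (X ^ (m + 1) + C ((m : ℚ) + 1) * X ^ m) := by
  rw [derivative_smul, derivative_E_succ, ← factorial_smul_E_succ_sub, smul_sub, sub_sub_cancel]

/-- For every positive integer `n`, the discriminant of the monic polynomial
`n!·𝔈ₙ(x)` over `ℚ` equals `(-1)^{n(n-1)/2} · 2^{n-1} · (n!)ⁿ · 𝔈ₙ(-n)`. -/
theorem discriminant_factorial_smul_E (n : ℕ) (hn : 0 < n) :
    discC ((n.factorial : ℚ) • E n) =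
      (-1) ^ (n * (n - 1) / 2) * 2 ^ (n - 1) * (n.factorial : ℂ) ^ n *
        (((E n).eval (-(n : ℚ)) : ℚ) : ℂ) := by
  obtain ⟨m, rfl⟩ := Nat.exists_eq_add_one_of_ne_zero hn.ne'
  set f := ((m + 1).factorial : ℚ) • E (m + 1)
  set p := f.map (algebraMap ℚ ℂ)
  have hp : p.Splits := IsAlgClosed.splits p
  have h_deriv : ∀ α ∈ p.roots, (derivative p).eval α = α ^ m * (-((m : ℂ) + 1) - α) := by
    intro α hα
    rw [derivative_map, derivative_factorial_smul_E_succ, Polynomial.map_sub, eval_sub,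
      (isRoot_of_mem_roots hα).eq_zero]
    simp only [Polynomial.map_add, Polynomial.map_mul, Polynomial.map_pow, map_X, map_C, eval_add,
      eval_mul, eval_pow, eval_X, eval_C]
    push_cast
    ring
  have h_eval_cast : ∀ x : ℚ,
      p.eval (x : ℂ) = (m + 1).factorial * (((E (m + 1)).eval x : ℚ) : ℂ) := fun x => by
    rw [← eq_ratCast (algebraMap ℚ ℂ), eval_map, eval₂_at_apply]
    simp [f]
  have h_eval_zero : p.eval 0 = 2 * (m + 1).factorial := by
    simpa [E_eval_zero, mul_comm] using h_eval_cast 0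
  have h_eval_neg : p.eval (-((m : ℂ) + 1)) =
      (m + 1).factorial * (((E (m + 1)).eval (-((m + 1 : ℕ) : ℚ)) : ℚ) : ℂ) := by
    simpa using h_eval_cast (-((m + 1 : ℕ) : ℚ))
  have h_sign : ((-1 : ℂ) ^ (m + 1)) ^ m = 1 := by
    rw [← pow_mul, mul_comm, (Nat.even_mul_succ_self m).neg_one_pow]
  rw [discC_eq_prod_roots_eval_derivative (monic_factorial_smul_E _),
    Multiset.map_congr rfl h_deriv,
    hp.prod_roots_map_pow_mul_sub ((monic_factorial_smul_E _).map _), natDegree_map,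
    natDegree_factorial_smul_E, h_eval_zero, h_eval_neg, mul_pow, h_sign]
  simp only [Nat.add_sub_cancel]
  ring
end

section
/- Let n ≥ 2 and let f(x) = Σ_{i=0}^{n} c_i x^i/i! where c_i ∈ ℤ for 1 ≤ i ≤ n-1, c_n = 1, and c_0 = ±2^k for a nonnegative integer k. Let A(x) ∈ ℤ[x] be a monic irreducible factor of n!·f(x) of degree m with 1 ≤ m ≤ n/2. Then every odd prime p dividing the constant coefficient A(0) satisfies p ≤ m. -/
/-!
Work in `ℂ_[p]`, where the monic factor `A` splits. Since `p ∣ A(0)` and `A(0)` is, up to sign,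
the product of the `m` roots, a root `α` of least norm has `‖α‖ ^ m ≤ ‖p‖ = p⁻¹`. As `α` is also a
root of `n!·f`, the ultrametric inequality forces the constant term `c₀·n!`, of norm `‖n!‖`
because `p` is odd, to be dominated by some term `cᵢ (n!/i!) αⁱ` with `1 ≤ i ≤ n`; hence
`‖i!‖ ≤ ‖α‖ ^ i`. If `m < p`, Legendre's bound `(p - 1)·v_p(i!) < i` gives `m·v_p(i!) < i`, so
`‖i!‖ ^ m = p^(-m·v_p(i!)) > p^(-i) ≥ ‖α‖ ^ (m i)`, a contradiction.
-/

open Polynomial Finset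

theorem Polynomial.Splits.exists_isRoot_norm_pow_natDegree_le {K : Type*} [NormedField K]
    {P : K[X]} (hsplit : P.Splits) (hP : P.Monic) (hdeg : P.natDegree ≠ 0) :
    ∃ α, P.IsRoot α ∧ ‖α‖ ^ P.natDegree ≤ ‖P.coeff 0‖ := by
  classical
  have hcard : P.roots.card = P.natDegree := splits_iff_card_roots.mp hsplit
  have hne : P.roots.toFinset.Nonempty := by
    rw [Multiset.toFinset_nonempty, ← Multiset.card_pos]
    omega
  obtain ⟨α, hα, hαmin⟩ := P.roots.toFinset.exists_min_image norm hne
  rw [Multiset.mem_toFinset] at hα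
  refine ⟨α, (mem_roots hP.ne_zero).mp hα, ?_⟩
  calc ‖α‖ ^ P.natDegree = (P.roots.map fun _ ↦ ‖α‖).prod := by
        rw [Multiset.map_const', Multiset.prod_replicate, hcard]
    _ ≤ (P.roots.map norm).prod :=
        Multiset.prod_map_le_prod_map₀ _ _ (fun _ _ ↦ norm_nonneg α)
          fun β hβ ↦ hαmin β (Multiset.mem_toFinset.mpr hβ)
    _ = ‖P.coeff 0‖ := by
        rw [hsplit.coeff_zero_eq_prod_roots_of_monic hP, norm_mul, norm_pow, norm_neg, norm_one,
          one_pow, one_mul]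
        exact (map_multiset_prod (normHom : K →*₀ ℝ) _).symm

theorem exists_norm_factorial_le_norm_pow {K : Type*} [NormedField K] [IsUltrametricDist K]
    [CharZero K] {n : ℕ} {c : ℕ → ℤ} (hc0 : ‖(c 0 : K)‖ = 1) {α : K}
    (hα : ∑ i ∈ range (n + 1), ((c i * (n.factorial / i.factorial : ℕ) : ℤ) : K) * α ^ i = 0) :
    ∃ i ∈ Icc 1 n, ‖(i.factorial : K)‖ ≤ ‖α‖ ^ i := by
  set t : ℕ → K := fun i ↦ ((c i * (n.factorial / i.factorial : ℕ) : ℤ) : K) * α ^ i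
  have hnorm_t0 : ‖t 0‖ = ‖(n.factorial : K)‖ := by simp [t, hc0]
  have hsum : ∑ i ∈ Icc 1 n, t i = -t 0 := by
    rw [range_eq_Ico, sum_eq_sum_Ico_succ_bot (by omega)] at hα
    exact eq_neg_of_add_eq_zero_right hα
  have ht0 : t 0 ≠ 0 := by
    rw [← norm_ne_zero_iff, hnorm_t0, norm_ne_zero_iff]
    exact_mod_cast n.factorial_ne_zero
  obtain ⟨i, hi, hle⟩ := IsUltrametricDist.exists_norm_finsetSum_le_of_nonempty
    (nonempty_of_sum_ne_zero (hsum ▸ neg_ne_zero.mpr ht0)) t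
  refine ⟨i, hi, ?_⟩
  have hdvd : i.factorial ∣ n.factorial := Nat.factorial_dvd_factorial (mem_Icc.mp hi).2
  have hquot : 0 < ‖((n.factorial / i.factorial : ℕ) : K)‖ := by
    rw [norm_pos_iff, Nat.cast_ne_zero]
    exact (Nat.div_pos (Nat.le_of_dvd n.factorial_pos hdvd) i.factorial_pos).ne'
  refine le_of_mul_le_mul_right ?_ hquot
  calc ‖(i.factorial : K)‖ * ‖((n.factorial / i.factorial : ℕ) : K)‖ = ‖t 0‖ := by
        rw [hnorm_t0, ← norm_mul, ← Nat.cast_mul, Nat.mul_div_cancel' hdvd]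
    _ ≤ ‖t i‖ := by rwa [hsum, norm_neg] at hle
    _ = ‖(c i : K)‖ * ‖((n.factorial / i.factorial : ℕ) : K)‖ * ‖α‖ ^ i := by
        simp only [t, Int.cast_mul, Int.cast_natCast, norm_mul, norm_pow]
    _ ≤ 1 * ‖((n.factorial / i.factorial : ℕ) : K)‖ * ‖α‖ ^ i := by
        gcongr
        exact IsUltrametricDist.norm_intCast_le_one K (c i)
    _ = ‖α‖ ^ i * ‖((n.factorial / i.factorial : ℕ) : K)‖ := by ring

namespace PadicComplex

variable {p : ℕ} [Fact p.Prime]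

theorem norm_natCast_eq_inv_pow {n : ℕ} (hn : n ≠ 0) :
    ‖(n : ℂ_[p])‖ = (p : ℝ)⁻¹ ^ padicValNat p n := by
  rw [← map_natCast (algebraMap ℚ_[p] ℂ_[p]), norm_algebraMap',
    Padic.norm_eq_zpow_neg_valuation (by exact_mod_cast hn), Padic.valuation_natCast, zpow_neg,
    zpow_natCast, inv_pow]

theorem norm_natCast_eq_one {n : ℕ} (hn : ¬p ∣ n) : ‖(n : ℂ_[p])‖ = 1 := by
  rw [norm_natCast_eq_inv_pow (by rintro rfl; exact hn (dvd_zero p)),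
    padicValNat.eq_zero_of_not_dvd hn, pow_zero]

theorem norm_natCast_self : ‖(p : ℂ_[p])‖ = (p : ℝ)⁻¹ := by
  rw [norm_natCast_eq_inv_pow (Fact.out : p.Prime).ne_zero, padicValNat_self, pow_one]

theorem exists_aeval_eq_zero_norm_pow_natDegree_le {A : ℤ[X]} (hA : A.Monic)
    (hdeg : A.natDegree ≠ 0) (hdvd : (p : ℤ) ∣ A.coeff 0) :
    ∃ α : ℂ_[p], aeval α A = 0 ∧ ‖α‖ ^ A.natDegree ≤ (p : ℝ)⁻¹ := by
  set P := A.map (algebraMap ℤ ℂ_[p])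
  have hP : P.natDegree = A.natDegree := hA.natDegree_map _
  obtain ⟨α, hroot, hα⟩ :=
    (IsAlgClosed.splits P).exists_isRoot_norm_pow_natDegree_le (hA.map _) (hP ▸ hdeg)
  refine ⟨α, by rwa [IsRoot, eval_map_algebraMap] at hroot, ?_⟩
  obtain ⟨t, ht⟩ := hdvd
  calc ‖α‖ ^ A.natDegree ≤ ‖P.coeff 0‖ := hP ▸ hα
    _ = ‖(p : ℂ_[p])‖ * ‖(t : ℂ_[p])‖ := by simp [P, coeff_map, ht]
    _ ≤ ‖(p : ℂ_[p])‖ * 1 := by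
        gcongr
        exact IsUltrametricDist.norm_intCast_le_one _ t
    _ = (p : ℝ)⁻¹ := by rw [mul_one, norm_natCast_self]

theorem norm_pow_lt_norm_factorial {α : ℂ_[p]} {m i : ℕ} (hα : ‖α‖ ^ m ≤ (p : ℝ)⁻¹)
    (hmp : m < p) (hi : i ≠ 0) : ‖α‖ ^ i < ‖(i.factorial : ℂ_[p])‖ := by
  set s := padicValNat p i.factorial
  have hsm : s * m < i := calc
    s * m ≤ (p - 1) * s := by rw [mul_comm]; gcongr; omega
    _ < i := sub_one_mul_padicValNat_factorial_lt_of_ne_zero p hi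
  have hp : 1 < (p : ℝ) := by exact_mod_cast (Fact.out : p.Prime).one_lt
  refine lt_of_pow_lt_pow_left₀ m (norm_nonneg _) ?_
  calc (‖α‖ ^ i) ^ m = (‖α‖ ^ m) ^ i := by rw [← pow_mul, ← pow_mul, mul_comm]
    _ ≤ (p : ℝ)⁻¹ ^ i := pow_le_pow_left₀ (by positivity) hα i
    _ < (p : ℝ)⁻¹ ^ (s * m) :=
        pow_lt_pow_right_of_lt_one₀ (by positivity) (inv_lt_one_of_one_lt₀ hp) hsm
    _ = ‖(i.factorial : ℂ_[p])‖ ^ m := by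
        rw [norm_natCast_eq_inv_pow i.factorial_ne_zero, pow_mul]

end PadicComplex

theorem odd_prime_divisor_of_constant_coeff_le_degree_general (n : ℕ)
    (c : ℕ → ℤ) (k : ℕ)
    (hc0 : c 0 = 2 ^ k ∨ c 0 = -(2 ^ k))
    (F : Polynomial ℤ)
    (hF : F = ∑ i ∈ Finset.range (n + 1),
      C (c i * (n.factorial / i.factorial : ℕ)) * X ^ i)
    (A : Polynomial ℤ) (hA : A.Monic) (hAdvd : A ∣ F)
    (m : ℕ) (hm : A.natDegree = m) (hm1 : 1 ≤ m)
    (p : ℕ) (hp : p.Prime) (hpodd : Odd p) (hpdvd : (p : ℤ) ∣ A.coeff 0) :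
    p ≤ m := by
  have : Fact p.Prime := ⟨hp⟩
  obtain ⟨α, hαA, hαm⟩ :=
    PadicComplex.exists_aeval_eq_zero_norm_pow_natDegree_le hA (by omega) hpdvd
  have hFα : aeval α F = 0 := by
    obtain ⟨B, rfl⟩ := hAdvd
    rw [map_mul, hαA, zero_mul]
  have hp2 : ¬p ∣ 2 := fun h ↦ by
    rw [(Nat.prime_dvd_prime_iff_eq hp Nat.prime_two).mp h] at hpodd
    exact Nat.not_odd_iff_even.mpr even_two hpodd
  have hnorm_two : ‖(2 : ℂ_[p])‖ = 1 := by
    simpa using PadicComplex.norm_natCast_eq_one hp2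
  have hnorm_c0 : ‖(c 0 : ℂ_[p])‖ = 1 := by
    rcases hc0 with h | h <;> simp [h, hnorm_two]
  rw [hF, map_sum] at hFα
  simp only [map_mul (aeval α), aeval_X_pow, eq_intCast, map_intCast] at hFα
  obtain ⟨i, hi, hiα⟩ := exists_norm_factorial_le_norm_pow hnorm_c0 hFα
  by_contra! hmp
  exact (PadicComplex.norm_pow_lt_norm_factorial (hm ▸ hαm) hmp
    (Nat.one_le_iff_ne_zero.mp (mem_Icc.mp hi).1)).not_ge hiα

/-- Let `n ≥ 2` and `f(x) = ∑_{i=0}^n cᵢ xⁱ/i!` with `cᵢ ∈ ℤ`, `cₙ = 1` and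
`c₀ = ±2ᵏ` for a nonnegative integer `k`, so that
`n!·f(x) = ∑_{i=0}^n cᵢ (n!/i!) xⁱ` is a monic polynomial in `ℤ[x]`.
If `A ∈ ℤ[x]` is a monic irreducible factor of `n!·f(x)` of degree `m` with
`1 ≤ m ≤ n/2`, then every odd prime `p` dividing the constant coefficient `A(0)`
satisfies `p ≤ m`. -/
theorem odd_prime_divisor_of_constant_coeff_le_degree (n : ℕ) (hn : 2 ≤ n)
    (c : ℕ → ℤ) (k : ℕ) (hcn : c n = 1)
    (hc0 : c 0 = 2 ^ k ∨ c 0 = -(2 ^ k))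
    (F : Polynomial ℤ)
    (hF : F = ∑ i ∈ Finset.range (n + 1),
      C (c i * (n.factorial / i.factorial : ℕ)) * X ^ i)
    (A : Polynomial ℤ) (hA : A.Monic) (hAirr : Irreducible A) (hAdvd : A ∣ F)
    (m : ℕ) (hm : A.natDegree = m) (hm1 : 1 ≤ m) (hm2 : 2 * m ≤ n)
    (p : ℕ) (hp : p.Prime) (hpodd : Odd p) (hpdvd : (p : ℤ) ∣ A.coeff 0) :
    p ≤ m :=
  odd_prime_divisor_of_constant_coeff_le_degree_general n c k hc0 F hF A hA hAdvd m hm hm1 p hp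
    hpodd hpdvd
end

section
/- Let n be an even positive integer and let p be an odd prime dividing n-1. Then the p-adic valuation of 𝔈_n(-n) equals -v_p(n!), i.e. v_p(𝔈_n(-n)) = -v_p((n-1)!) = -v_p(n!). -/
/-!
Clearing denominators, `n! · 𝔈ₙ(-n) = (-n)ⁿ + 2 ∑_{i<n} (n!/i!) (-n)ⁱ` is an integer. If `p ∣ n - 1`,
then `n!/i!` contains the factor `n - 1` for every `i ≤ n - 2`, and `n ≡ 1 (mod p)`, so this integer
is `≡ 1 + 2 · (-1)ⁿ⁻¹ = -1 (mod p)` for even `n`. Hence `v_p(𝔈ₙ(-n)) = -v_p(n!)`, and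
`v_p(n!) = v_p((n-1)!)` because `p ∤ n`.
-/

open Polynomial Finset

open scoped Nat

/-- `n! · 𝔈ₙ(x)`, written with integral coefficients so that it makes sense in any ring. -/
def scaledE {R : Type*} [CommRing R] (n : ℕ) (x : R) : R :=
  x ^ n + 2 * ∑ i ∈ range n, (n.descFactorial (n - i) : R) * x ^ i

@[simp, norm_cast]
theorem Int.cast_scaledE {R : Type*} [CommRing R] (n : ℕ) (x : ℤ) :
    ((scaledE n x : ℤ) : R) = scaledE n (x : R) := by
  simp [scaledE]

theorem factorial_mul_eval_E (n : ℕ) (x : ℚ) : (n ! : ℚ) * (E n).eval x = scaledE n x := by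
  have hcoeff : ∀ i ∈ range n, (n ! : ℚ) * (1 / i !) = n.descFactorial (n - i) := by
    intro i hi
    have h := Nat.factorial_mul_descFactorial (Nat.sub_le n i)
    rw [Nat.sub_sub_self (mem_range.1 hi).le] at h
    rw [← h]
    push_cast
    field_simp
  simp only [E, scaledE, eval_add, eval_mul, eval_C, eval_pow, eval_X, eval_finsetSum]
  rw [mul_add, mul_left_comm _ (2 : ℚ), mul_sum]
  congr 2
  · field_simp
  · exact sum_congr rfl fun i hi => by rw [← hcoeff i hi, mul_assoc]

theorem natCast_descFactorial_eq_zero {R : Type*} [CommSemiring R] {n k : ℕ}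
    (h : ((n - 1 : ℕ) : R) = 0) (hk : 2 ≤ k) : (n.descFactorial k : R) = 0 := by
  rw [Nat.descFactorial_eq_prod_range, Nat.cast_prod]
  exact prod_eq_zero (mem_range.2 hk) h

theorem scaledE_succ_neg_eq_neg_one {R : Type*} [CommRing R] {m : ℕ} (hm : Odd m)
    (h : (m : R) = 0) : scaledE (m + 1) (-(m + 1 : R)) = -1 := by
  have hlow : ∀ i ∈ range m, ((m + 1).descFactorial (m + 1 - i) : R) * (-(m + 1 : R)) ^ i = 0 := by
    intro i hi
    rw [natCast_descFactorial_eq_zero (by simpa using h) (by simp at hi; omega), zero_mul]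
  rw [scaledE, sum_range_succ, sum_eq_zero hlow, Nat.add_sub_cancel_left, Nat.descFactorial_one]
  push_cast
  rw [h, zero_add, hm.add_one.neg_one_pow, hm.neg_one_pow]
  ring

theorem padicValRat_intCast_div_natCast {p : ℕ} [Fact p.Prime] {a : ℤ} {b : ℕ}
    (ha : ¬ (p : ℤ) ∣ a) (hb : b ≠ 0) : padicValRat p (a / b) = -(padicValNat p b : ℤ) := by
  have ha0 : (a : ℚ) ≠ 0 := Int.cast_ne_zero.2 <| by rintro rfl; exact ha (dvd_zero _)
  rw [padicValRat.div ha0 (by exact_mod_cast hb), padicValRat.of_int, padicValRat.of_nat,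
    padicValInt.eq_zero_of_not_dvd ha, Nat.cast_zero, zero_sub]

theorem padicValNat_factorial_succ_of_not_dvd {p : ℕ} [Fact p.Prime] {m : ℕ} (h : ¬ p ∣ m + 1) :
    padicValNat p (m + 1)! = padicValNat p m ! := by
  rw [Nat.factorial_succ, padicValNat.mul m.succ_ne_zero m.factorial_ne_zero,
    padicValNat.eq_zero_of_not_dvd h, zero_add]

theorem padicValRat_E_eval_neg_n_general (n p : ℕ) (hn : 0 < n) (hne : Even n)
    (hp : p.Prime) (hdvd : p ∣ n - 1) :
    padicValRat p ((E n).eval (-(n : ℚ))) = -(padicValNat p (n - 1).factorial : ℤ) ∧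
    padicValRat p ((E n).eval (-(n : ℚ))) = -(padicValNat p n.factorial : ℤ) := by
  have : Fact p.Prime := ⟨hp⟩
  obtain ⟨m, rfl⟩ : ∃ m, n = m + 1 := ⟨n - 1, (Nat.succ_pred_eq_of_pos hn).symm⟩
  rw [Nat.add_sub_cancel] at hdvd ⊢
  set N : ℤ := scaledE (m + 1) (-(m + 1 : ℤ)) with hN_def
  have hN : (N : ZMod p) = -1 := by
    push_cast [hN_def]
    exact scaledE_succ_neg_eq_neg_one (Nat.not_even_iff_odd.1 (Nat.even_add_one.1 hne))
      ((ZMod.natCast_eq_zero_iff m p).2 hdvd)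
  have hpN : ¬ (p : ℤ) ∣ N := by
    rw [← ZMod.intCast_zmod_eq_zero_iff_dvd, hN]
    exact neg_ne_zero.2 one_ne_zero
  have hE : (E (m + 1)).eval (-((m + 1 : ℕ) : ℚ)) = N / (m + 1)! := by
    rw [eq_div_iff (by positivity), mul_comm, factorial_mul_eval_E]
    push_cast [hN_def]
    rfl
  have hpm : ¬ p ∣ m + 1 := fun h => hp.one_lt.ne' (Nat.dvd_one.1 ((Nat.dvd_add_right hdvd).1 h))
  rw [hE, padicValRat_intCast_div_natCast hpN (m + 1).factorial_ne_zero,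
    padicValNat_factorial_succ_of_not_dvd hpm]
  exact ⟨rfl, rfl⟩

/-- Let `n` be an even positive integer and `p` an odd prime dividing `n - 1`.
Then `v_p(𝔈ₙ(-n)) = -v_p((n-1)!) = -v_p(n!)`, where `v_p` is the `p`-adic
valuation extended to `ℚ`. -/
theorem padicValRat_E_eval_neg_n (n p : ℕ) (hn : 0 < n) (hne : Even n)
    (hp : p.Prime) (hpodd : Odd p) (hdvd : p ∣ n - 1) :
    padicValRat p ((E n).eval (-(n : ℚ))) = -(padicValNat p (n - 1).factorial : ℤ) ∧
    padicValRat p ((E n).eval (-(n : ℚ))) = -(padicValNat p n.factorial : ℤ) :=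
  padicValRat_E_eval_neg_n_general n p hn hne hp hdvd
end
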